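/- (Direct sum for boolean-valued relations.) Fix a finite set X and n, k ∈ ℕ. Let f¹,...,fⁿ ⊆ X^k × {0,1} be non-trivial relations, and define h ⊆ X^{kn} × {0,1}^n by h = (f¹,f²,...,fⁿ), i.e. h = {((x¹,...,xⁿ), y) : ∀i ∈ [n], (x^i, y_i) ∈ f^i}. Then D(h) = Σ_{i ∈ [n]} D(f^i). -/

import Mathlib

/-- A decision tree over input alphabet `X` with `n` variables and output set `Y`:
either a leaf labelled by an output, or an internal vertex labelled by a variable
index with one child for each element of `X`. -/
inductive DTree (X : Type) (n : ℕ) (Y : Type) : Type where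
  | leaf : Y → DTree X n Y
  | node : Fin n → (X → DTree X n Y) → DTree X n Y

namespace DTree

/-- The function computed by a decision tree: query the variable labelling the
current vertex, follow the corresponding edge, and output the leaf label reached. -/
def eval {X Y : Type} {n : ℕ} : DTree X n Y → (Fin n → X) → Y
  | leaf y, _ => y
  | node i c, x => (c (x i)).eval x

/-- The weighted depth of a decision tree with weights `w`: the maximum, over all
root-to-leaf paths, of the sum of `w i` over the query labels `i` on that path. -/
def wdepth {X Y : Type} {n : ℕ} [Fintype X] (w : Fin n → ℕ) : DTree X n Y → ℕ
  | leaf _ => 0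
  | node i c => w i + Finset.univ.sup fun b => (c b).wdepth w

end DTree

/-- A decision tree `T` computes the relation `f ⊆ X^n × Y` if for every
`x ∈ dom f`, `(x, T.eval x) ∈ f`. -/
def Computes {X Y : Type} {n : ℕ} (T : DTree X n Y) (f : Set ((Fin n → X) × Y)) : Prop :=
  ∀ x : Fin n → X, (∃ y, (x, y) ∈ f) → (x, T.eval x) ∈ f

/-- The weighted decision tree complexity `D(f,[w₁,…,wₙ])`: the minimal weighted
depth over all decision trees computing `f`. -/
noncomputable def wDT {X Y : Type} {n : ℕ} [Fintype X]
    (f : Set ((Fin n → X) × Y)) (w : Fin n → ℕ) : ℕ :=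
  sInf {d | ∃ T : DTree X n Y, Computes T f ∧ T.wdepth w = d}

/-- The (unweighted) decision tree complexity `D(f) = D(f,[1,…,1])`. -/
noncomputable def DT {X Y : Type} {n : ℕ} [Fintype X] (f : Set ((Fin n → X) × Y)) : ℕ :=
  wDT f fun _ => 1

/-- A relation `f` is constant if there exists `y` with `f⁻¹(y) = dom f`. -/
def ConstantRel {X Y : Type} {n : ℕ} (f : Set ((Fin n → X) × Y)) : Prop :=
  ∃ y : Y, ∀ x : Fin n → X, (x, y) ∈ f ↔ ∃ y', (x, y') ∈ f

/-- A relation `f` is trivial if for every `y`, `f⁻¹(y) = dom f`. -/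
def TrivialRel {X Y : Type} {n : ℕ} (f : Set ((Fin n → X) × Y)) : Prop :=
  ∀ y : Y, ∀ x : Fin n → X, (x, y) ∈ f ↔ ∃ y', (x, y') ∈ f

/-- The restriction `f_{i←b} = {(x,y) ∈ f : x_i = b}`. -/
def restrictRel {X Y : Type} {n : ℕ} (f : Set ((Fin n → X) × Y)) (i : Fin n) (b : X) :
    Set ((Fin n → X) × Y) := {p ∈ f | p.1 i = b}

/-- The index, inside a string split into `n` consecutive blocks of lengths
`m 0, …, m (n-1)`, of the `j`'th position of the `i`'th block. -/
def blockIdx {n : ℕ} {m : Fin n → ℕ} (i : Fin n) (j : Fin (m i)) : Fin (∑ k, m k) :=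
  ⟨(∑ k ∈ Finset.univ.filter (fun k => k < i), m k) + j.val, by
    have hj := j.isLt
    have h1 : (∑ k ∈ Finset.univ.filter (fun k => k < i), m k) + j.val
        < ∑ k ∈ insert i (Finset.univ.filter (fun k => k < i)), m k := by
      rw [Finset.sum_insert (by simp)]
      omega
    exact h1.trans_le (Finset.sum_le_sum_of_subset fun x _ => Finset.mem_univ x)⟩

/-- The `i`'th block (of length `m i`) of the input `x`. -/
def block {X : Type} {n : ℕ} {m : Fin n → ℕ} (x : Fin (∑ k, m k) → X) (i : Fin n) :
    Fin (m i) → X := fun j => x (blockIdx i j)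

/-- The composition `g ∘ (f¹,…,fⁿ)` of an outer relation `g ⊆ Y^n × Z` with inner
relations `fⁱ ⊆ X^{mᵢ} × Y`:
`{(x,z) : ∃ y ∈ Y^n, (∀ i, (xⁱ, yᵢ) ∈ fⁱ) ∧ (y,z) ∈ g}`. -/
def Compose {X Y Z : Type} {n : ℕ} {m : Fin n → ℕ}
    (g : Set ((Fin n → Y) × Z)) (f : (i : Fin n) → Set ((Fin (m i) → X) × Y)) :
    Set ((Fin (∑ k, m k) → X) × Z) :=
  {p | ∃ y : Fin n → Y, (∀ i, (block p.1 i, y i) ∈ f i) ∧ (y, p.2) ∈ g}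

/-- The relation `ḡ` obtained from `g` by substituting, for each `i` such that the
inner relation `fⁱ` is constant with (unique) value `bᵢ`, the constant `bᵢ` as the
`i`'th input to `g`. -/
def substConst {X Y Z : Type} {n : ℕ} {m : Fin n → ℕ}
    (g : Set ((Fin n → Y) × Z)) (f : (i : Fin n) → Set ((Fin (m i) → X) × Y)) :
    Set ((Fin n → Y) × Z) :=
  {p ∈ g | ∀ i b, (∀ x, (x, b) ∈ f i ↔ ∃ y', (x, y') ∈ f i) → p.1 i = b}

/-!
Run optimal trees for the blocks one after another: this gives `D(h) ≤ Σᵢ D(fⁱ)`.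
Conversely, answer the queries of a tree for `h` adversarially. A query to position `j` of
block `i` is answered by a value `b` that keeps `fⁱ` satisfiable and maximizes the complexity
of the restriction `fⁱ_{j←b}`; then `D(fⁱ) ≤ 1 + D(fⁱ_{j←b})`, so every query lowers the
remaining total `Σᵢ D(fⁱ)` by at most one. As long as every `fⁱ` is nonempty the blocks are
independent, so a leaf of a tree for `h` is a correct answer for each block on its own.
The argument is the same for weighted complexity, a query then costing its weight.
-/

lemma sum_le_add_sum_of_le_of_forall_ne {ι M : Type} [Fintype ι] [DecidableEq ι]
    [AddCommMonoid M] [PartialOrder M] [IsOrderedAddMonoid M] {g g' : ι → M} {a : M} (i : ι)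
    (hi : g i ≤ a + g' i) (h : ∀ l ≠ i, g l = g' l) : ∑ l, g l ≤ a + ∑ l, g' l := by
  rw [← Finset.add_sum_erase _ _ (Finset.mem_univ i),
    ← Finset.add_sum_erase _ g' (Finset.mem_univ i),
    Finset.sum_congr rfl fun l hl => h l (Finset.ne_of_mem_erase hl), ← add_assoc]
  gcongr

namespace DTree

variable {X Y Z : Type} {N k : ℕ}

def bind : DTree X N Y → (Y → DTree X N Z) → DTree X N Z
  | leaf y, κ => κ y
  | node i c, κ => node i fun b => (c b).bind κ

def relabel (ι : Fin k → Fin N) : DTree X k Y → DTree X N Y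
  | leaf y => leaf y
  | node j c => node (ι j) fun b => (c b).relabel ι

def pi : {n : ℕ} → (Fin n → DTree X N Y) → DTree X N (Fin n → Y)
  | 0, _ => leaf finZeroElim
  | _ + 1, Ts =>
    (Ts 0).bind fun y => (pi fun i => Ts i.succ).bind fun ys => leaf (Fin.cons y ys)

def ofFun : {N : ℕ} → ((Fin N → X) → Y) → DTree X N Y
  | 0, F => leaf (F finZeroElim)
  | _ + 1, F => node 0 fun b => (ofFun fun x => F (Fin.cons b x)).relabel Fin.succ

@[simp]
lemma eval_bind (T : DTree X N Y) (κ : Y → DTree X N Z) (x : Fin N → X) :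
    (T.bind κ).eval x = (κ (T.eval x)).eval x := by
  induction T with
  | leaf y => rfl
  | node i c ih => exact ih (x i)

@[simp]
lemma eval_relabel (ι : Fin k → Fin N) (T : DTree X k Y) (x : Fin N → X) :
    (T.relabel ι).eval x = T.eval (x ∘ ι) := by
  induction T with
  | leaf y => rfl
  | node j c ih => exact ih (x (ι j))

@[simp]
lemma eval_pi {n : ℕ} (Ts : Fin n → DTree X N Y) (x : Fin N → X) :
    (pi Ts).eval x = fun i => (Ts i).eval x := by
  induction n with
  | zero => funext i; exact i.elim0
  | succ n ih =>
    funext i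
    simp only [pi, eval_bind, ih, eval]
    cases i using Fin.cases <;> rfl

@[simp]
lemma eval_ofFun (F : (Fin N → X) → Y) (x : Fin N → X) : (ofFun F).eval x = F x := by
  induction N with
  | zero => exact congrArg F (Subsingleton.elim _ _)
  | succ N ih =>
    simp only [ofFun, eval, eval_relabel, ih]
    exact congrArg F (Fin.cons_self_tail x)

section wdepth

variable [Fintype X] (w : Fin N → ℕ)

lemma wdepth_bind_le (T : DTree X N Y) {κ : Y → DTree X N Z} {s : ℕ}
    (hκ : ∀ y, (κ y).wdepth w ≤ s) : (T.bind κ).wdepth w ≤ T.wdepth w + s := by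
  induction T with
  | leaf y => simpa [bind, wdepth] using hκ y
  | node i c ih =>
    simp only [bind, wdepth, add_assoc]
    gcongr
    exact Finset.sup_le fun b _ => (ih b).trans <| by
      gcongr
      exact Finset.le_sup (f := fun b => (c b).wdepth w) (Finset.mem_univ b)

lemma wdepth_relabel (ι : Fin k → Fin N) (T : DTree X k Y) :
    (T.relabel ι).wdepth w = T.wdepth (w ∘ ι) := by
  induction T with
  | leaf y => rfl
  | node j c ih => simp only [relabel, wdepth, ih]; rfl

lemma wdepth_pi_le {n : ℕ} (Ts : Fin n → DTree X N Y) :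
    (pi Ts).wdepth w ≤ ∑ i, (Ts i).wdepth w := by
  induction n with
  | zero => simp [pi, wdepth]
  | succ n ih =>
    rw [Fin.sum_univ_succ]
    refine wdepth_bind_le w _ fun y => ?_
    exact (wdepth_bind_le w _ (s := 0) fun ys => le_rfl).trans (ih _)

end wdepth

end DTree

section Computes

variable {X Y : Type} {N : ℕ} {f : Set ((Fin N → X) × Y)}

lemma Computes.restrict {j : Fin N} {c : X → DTree X N Y} (hT : Computes (.node j c) f)
    (b : X) : Computes (c b) (restrictRel f j b) := by
  rintro x ⟨y, hxy, rfl⟩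
  exact ⟨hT x ⟨y, hxy⟩, rfl⟩

lemma Computes.node {j : Fin N} {c : X → DTree X N Y}
    (hc : ∀ b, Computes (c b) (restrictRel f j b)) : Computes (.node j c) f :=
  fun x ⟨y, hxy⟩ => (hc (x j) x ⟨y, hxy, rfl⟩).1

lemma computes_ofFun_epsilon [Nonempty Y] (f : Set ((Fin N → X) × Y)) :
    Computes (DTree.ofFun fun x => Classical.epsilon fun y => (x, y) ∈ f) f := fun x hx => by
  simpa using Classical.epsilon_spec hx

end Computes

lemma nonempty_of_not_trivialRel {X Y : Type} {N : ℕ} {f : Set ((Fin N → X) × Y)}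
    (h : ¬ TrivialRel f) : f.Nonempty := by
  contrapose! h
  simp [TrivialRel, h]

section wDT

variable {X Y : Type} [Fintype X] {N : ℕ} (w : Fin N → ℕ)

lemma wDT_le_wdepth {f : Set ((Fin N → X) × Y)} {T : DTree X N Y} (hT : Computes T f) :
    wDT f w ≤ T.wdepth w :=
  Nat.sInf_le ⟨T, hT, rfl⟩

lemma exists_computes_wdepth_eq_wDT [Nonempty Y] (f : Set ((Fin N → X) × Y)) :
    ∃ T : DTree X N Y, Computes T f ∧ T.wdepth w = wDT f w := by
  have : ∃ d, ∃ T : DTree X N Y, Computes T f ∧ T.wdepth w = d :=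
    ⟨_, _, computes_ofFun_epsilon f, rfl⟩
  exact Nat.sInf_mem this

lemma wDT_eq_zero_of_not_nonempty [Nonempty Y] {f : Set ((Fin N → X) × Y)}
    (hf : ¬ f.Nonempty) : wDT f w = 0 :=
  Nat.eq_zero_of_le_zero <| wDT_le_wdepth w (T := .leaf (Classical.arbitrary Y))
    fun _ ⟨_, hy⟩ => (hf ⟨_, hy⟩).elim

lemma exists_wDT_le_add_wDT_restrictRel {f : Set ((Fin N → X) × Y)} (hf : f.Nonempty)
    (j : Fin N) :
    ∃ b, (restrictRel f j b).Nonempty ∧ wDT f w ≤ w j + wDT (restrictRel f j b) w := by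
  classical
  obtain ⟨⟨x, y⟩, hxy⟩ := hf
  have : Nonempty Y := ⟨y⟩
  obtain ⟨b, hb, hmax⟩ := Finset.exists_max_image
    (Finset.univ.filter fun b => (restrictRel f j b).Nonempty) (fun b => wDT (restrictRel f j b) w)
    ⟨x j, Finset.mem_filter.2 ⟨Finset.mem_univ _, (x, y), hxy, rfl⟩⟩
  choose c hc hcw using fun b => exists_computes_wdepth_eq_wDT w (restrictRel f j b)
  refine ⟨b, by simpa using hb, ?_⟩
  calc wDT f w ≤ (DTree.node j c).wdepth w := wDT_le_wdepth w (Computes.node hc)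
    _ = w j + Finset.univ.sup fun b => wDT (restrictRel f j b) w := by simp [DTree.wdepth, hcw]
    _ ≤ w j + wDT (restrictRel f j b) w := by
      gcongr
      refine Finset.sup_le fun b' _ => ?_
      by_cases hb' : (restrictRel f j b').Nonempty
      · exact hmax b' (by simpa using hb')
      · simp [wDT_eq_zero_of_not_nonempty w hb']

end wDT

section Blocks

variable {X : Type} {n : ℕ} {m : Fin n → ℕ}

lemma blockIdx_eq_finSigmaFinEquiv (i : Fin n) (j : Fin (m i)) :
    blockIdx i j = finSigmaFinEquiv ⟨i, j⟩ := by
  ext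
  simp only [blockIdx, finSigmaFinEquiv_apply]
  congr 1
  refine (Finset.sum_congr ?_ fun _ _ => rfl).trans
    (Finset.sum_map Finset.univ (Fin.castLEEmb i.isLt.le) m)
  ext l
  simp only [Finset.mem_filter, Finset.mem_univ, true_and, Finset.mem_map, Fin.castLEEmb_apply]
  exact ⟨fun h => ⟨⟨l, h⟩, rfl⟩, by rintro ⟨l, -, rfl⟩; exact l.isLt⟩

lemma exists_blockIdx_eq (v : Fin (∑ i, m i)) : ∃ i j, blockIdx (m := m) i j = v :=
  let ⟨⟨i, j⟩, h⟩ := finSigmaFinEquiv.surjective v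
  ⟨i, j, (blockIdx_eq_finSigmaFinEquiv i j).trans h⟩

lemma exists_block_eq (g : (i : Fin n) → Fin (m i) → X) : ∃ x, ∀ i, block x i = g i :=
  ⟨fun v => g (finSigmaFinEquiv.symm v).1 (finSigmaFinEquiv.symm v).2,
    fun i => funext fun j => by
      rw [block, blockIdx_eq_finSigmaFinEquiv, Equiv.symm_apply_apply]⟩

end Blocks

def directSumRel {X Y : Type} {n : ℕ} {m : Fin n → ℕ}
    (f : (i : Fin n) → Set ((Fin (m i) → X) × Y)) :
    Set ((Fin (∑ i, m i) → X) × (Fin n → Y)) :=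
  {p | ∀ i, (block p.1 i, p.2 i) ∈ f i}

section DirectSum

variable {X Y : Type} {n : ℕ} {m : Fin n → ℕ}
  {f : (i : Fin n) → Set ((Fin (m i) → X) × Y)}

lemma restrictRel_directSumRel (i : Fin n) (j : Fin (m i)) (b : X) :
    restrictRel (directSumRel f) (blockIdx i j) b
      = directSumRel (Function.update f i (restrictRel (f i) j b)) := by
  ext ⟨x, y⟩
  constructor
  · rintro ⟨h, hb⟩ l
    rcases eq_or_ne l i with rfl | hl
    · rw [Function.update_self]
      exact ⟨h l, hb⟩
    · rw [Function.update_of_ne hl]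
      exact h l
  · intro h
    have hi := h i
    rw [Function.update_self] at hi
    refine ⟨fun l => ?_, hi.2⟩
    rcases eq_or_ne l i with rfl | hl
    · exact hi.1
    · simpa [Function.update_of_ne hl] using h l

lemma exists_mem_directSumRel_block_eq (hf : ∀ i, (f i).Nonempty) {i : Fin n}
    {p : (Fin (m i) → X) × Y} (hp : p ∈ f i) :
    ∃ q ∈ directSumRel f, block q.1 i = p.1 := by
  choose r hr using hf
  obtain ⟨x, hx⟩ := exists_block_eq (Function.update (fun l => (r l).1) i p.1)
  refine ⟨(x, Function.update (fun l => (r l).2) i p.2), fun l => ?_, by simp [hx]⟩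
  rcases eq_or_ne l i with rfl | hl
  · simpa [hx] using hp
  · simpa [hx, hl] using hr l

lemma Computes.leaf_of_directSumRel (hf : ∀ i, (f i).Nonempty) {y : Fin n → Y}
    (hy : Computes (.leaf y) (directSumRel f)) (i : Fin n) : Computes (.leaf (y i)) (f i) := by
  rintro x ⟨yi, hxy⟩
  obtain ⟨q, hq, hqx⟩ := exists_mem_directSumRel_block_eq hf hxy
  simpa [hqx, DTree.eval] using hy q.1 ⟨q.2, hq⟩ i

lemma Computes.directSumRel_pi {T : (i : Fin n) → DTree X (m i) Y}
    (hT : ∀ i, Computes (T i) (f i)) :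
    Computes (DTree.pi fun i => (T i).relabel (blockIdx i)) (directSumRel f) := by
  rintro x ⟨y, hxy⟩ i
  simp only [DTree.eval_pi, DTree.eval_relabel]
  exact hT i (block x i) ⟨y i, hxy i⟩

variable [Fintype X] (w : Fin (∑ i, m i) → ℕ)

lemma wDT_directSumRel_le [Nonempty Y] :
    wDT (directSumRel f) w ≤ ∑ i, wDT (f i) (w ∘ blockIdx i) := by
  choose T hT hTw using fun i => exists_computes_wdepth_eq_wDT (w ∘ blockIdx i) (f i)
  calc wDT (directSumRel f) w
      ≤ (DTree.pi fun i => (T i).relabel (blockIdx i)).wdepth w :=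
        wDT_le_wdepth w (Computes.directSumRel_pi hT)
    _ ≤ ∑ i, ((T i).relabel (blockIdx i)).wdepth w := DTree.wdepth_pi_le w _
    _ = ∑ i, wDT (f i) (w ∘ blockIdx i) := by simp only [DTree.wdepth_relabel, hTw]

lemma sum_wDT_le_wdepth_of_computes_directSumRel (T : DTree X (∑ i, m i) (Fin n → Y))
    (hf : ∀ i, (f i).Nonempty) (hT : Computes T (directSumRel f)) :
    ∑ i, wDT (f i) (w ∘ blockIdx i) ≤ T.wdepth w := by
  induction T generalizing f with
  | leaf y =>
    have : ∀ i, wDT (f i) (w ∘ blockIdx i) = 0 := fun i =>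
      Nat.eq_zero_of_le_zero (wDT_le_wdepth _ (hT.leaf_of_directSumRel hf i))
    simp [this, DTree.wdepth]
  | node v c ih =>
    obtain ⟨i, j, rfl⟩ := exists_blockIdx_eq v
    obtain ⟨b, hb, hle⟩ := exists_wDT_le_add_wDT_restrictRel (w ∘ blockIdx i) (hf i) j
    set f' := Function.update f i (restrictRel (f i) j b)
    have hf' : ∀ l, (f' l).Nonempty := fun l => by
      rcases eq_or_ne l i with rfl | hl
      · simpa [f'] using hb
      · simpa [f', hl] using hf l
    have hc : Computes (c b) (directSumRel f') := restrictRel_directSumRel i j b ▸ hT.restrict b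
    have hsum : ∑ l, wDT (f l) (w ∘ blockIdx l)
        ≤ w (blockIdx i j) + ∑ l, wDT (f' l) (w ∘ blockIdx l) := by
      refine sum_le_add_sum_of_le_of_forall_ne i (by simpa [f'] using hle) fun l hl => ?_
      simp [f', Function.update_of_ne hl]
    calc ∑ l, wDT (f l) (w ∘ blockIdx l)
        ≤ w (blockIdx i j) + (c b).wdepth w := hsum.trans (by gcongr; exact ih b hf' hc)
      _ ≤ (DTree.node (blockIdx i j) c).wdepth w := by
        rw [DTree.wdepth]
        gcongr
        exact Finset.le_sup (f := fun b => (c b).wdepth w) (Finset.mem_univ b)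

theorem wDT_directSumRel [Nonempty Y] (hf : ∀ i, (f i).Nonempty) :
    wDT (directSumRel f) w = ∑ i, wDT (f i) (w ∘ blockIdx i) := by
  refine le_antisymm (wDT_directSumRel_le w) ?_
  obtain ⟨T, hT, hTw⟩ := exists_computes_wdepth_eq_wDT w (directSumRel f)
  exact hTw ▸ sum_wDT_le_wdepth_of_computes_directSumRel w T hf hT

end DirectSum

theorem direct_sum_general {X : Type} [Fintype X] {n k : ℕ}
    (f : Fin n → Set ((Fin k → X) × Bool)) (hf : ∀ i, ¬ TrivialRel (f i)) :
    DT {p : (Fin (∑ _ : Fin n, k) → X) × (Fin n → Bool) |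
        ∀ i : Fin n, (block p.1 i, p.2 i) ∈ f i} = ∑ i, DT (f i) :=
  wDT_directSumRel (f := f) (fun _ => 1) fun i => nonempty_of_not_trivialRel (hf i)

/-- Direct sum for boolean-valued relations: for non-trivial
`f¹,…,fⁿ ⊆ X^k × {0,1}` and `h = (f¹,…,fⁿ) ⊆ X^{kn} × {0,1}^n`,
`D(h) = Σᵢ D(fⁱ)`. -/
theorem direct_sum {X : Type} [Fintype X] [Nonempty X] {n k : ℕ}
    (f : Fin n → Set ((Fin k → X) × Bool)) (hf : ∀ i, ¬ TrivialRel (f i)) :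
    DT {p : (Fin (∑ _ : Fin n, k) → X) × (Fin n → Bool) |
        ∀ i : Fin n, (block p.1 i, p.2 i) ∈ f i} = ∑ i, DT (f i) :=
  direct_sum_general f hf
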